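/- Let 𝒴 ⊂ ℝ be a finite set, let 𝒜, 𝒢₁, ℬ₁, 𝒢₂ be finite types, let p be a strictly positive probability mass function on 𝒴 × 𝒜 × 𝒢₁ × ℬ₁ × 𝒢₂, and fix a ∈ 𝒜. If Y ⊥ B₁ | (A, G₁, G₂) under p, then Var_p( ψ_a^{(G₁,B₁),G₂}(Y,A,G₁,B₁,G₂) ) ≥ Var_p( ψ_a^{G₁,G₂}(Y,A,G₁,G₂) ). -/

import Mathlib

/-!
Under `Y ⊥ B₁ | (A, G₁, G₂)` the regression `m_{(G₁,B₁),G₂}` equals `m_{G₁,G₂}`, so the two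
influence functions share their projection terms and `ψ^{(G₁,B₁),G₂} = ψ^{G₁,G₂} + D` with
`D = 1{A = a} (w_{GB} - w_{GG}) (Y - m_{G₁,G₂})`. `D` is centred because `Y - m` has conditional
mean zero given `(a, G₁, B₁, G₂)`. It is uncorrelated with `ψ^{G₁,G₂}` because the conditional
second moment of `Y - m` given `(a, G₁, B₁, G₂)` does not depend on `B₁`, while both weights,
integrated against `p(a, g₁, ·, g₂)`, give `p(g₁) p(g₂)`. Hence the variance grows by `E[D²]`.
-/

open Finset

noncomputable section

variable {Y : Finset ℝ} {A G₁ B₁ G₂ : Type}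
variable [Fintype A] [Fintype G₁] [Fintype B₁] [Fintype G₂] [DecidableEq A]

/-- Marginal `p(g₁)`. -/
def pG1 (p : Y × A × G₁ × B₁ × G₂ → ℝ) (g₁ : G₁) : ℝ :=
  ∑ y : Y, ∑ a : A, ∑ b₁ : B₁, ∑ g₂ : G₂, p (y, a, g₁, b₁, g₂)

/-- Marginal `p(b₁)`. -/
def pB1 (p : Y × A × G₁ × B₁ × G₂ → ℝ) (b₁ : B₁) : ℝ :=
  ∑ y : Y, ∑ a : A, ∑ g₁ : G₁, ∑ g₂ : G₂, p (y, a, g₁, b₁, g₂)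

/-- Marginal `p(g₂)`. -/
def pG2 (p : Y × A × G₁ × B₁ × G₂ → ℝ) (g₂ : G₂) : ℝ :=
  ∑ y : Y, ∑ a : A, ∑ g₁ : G₁, ∑ b₁ : B₁, p (y, a, g₁, b₁, g₂)

/-- Marginal `p(g₁, b₁)`. -/
def pG1B1 (p : Y × A × G₁ × B₁ × G₂ → ℝ) (g₁ : G₁) (b₁ : B₁) : ℝ :=
  ∑ y : Y, ∑ a : A, ∑ g₂ : G₂, p (y, a, g₁, b₁, g₂)

/-- Marginal `p(a, b₁, g₂)`. -/
def pAB1G2 (p : Y × A × G₁ × B₁ × G₂ → ℝ) (a : A) (b₁ : B₁) (g₂ : G₂) : ℝ :=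
  ∑ y : Y, ∑ g₁ : G₁, p (y, a, g₁, b₁, g₂)

/-- Marginal `p(a, g₁, b₁, g₂)`. -/
def pAG1B1G2 (p : Y × A × G₁ × B₁ × G₂ → ℝ) (a : A) (g₁ : G₁) (b₁ : B₁) (g₂ : G₂) : ℝ :=
  ∑ y : Y, p (y, a, g₁, b₁, g₂)

/-- Marginal `p(a, g₁, g₂)`. -/
def pAG1G2 (p : Y × A × G₁ × B₁ × G₂ → ℝ) (a : A) (g₁ : G₁) (g₂ : G₂) : ℝ :=
  ∑ y : Y, ∑ b₁ : B₁, p (y, a, g₁, b₁, g₂)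

/-- Outcome regression `m_B(b₁,g₂) = ∑_y y·p(y | a, b₁, g₂)` for the
adjustment set `(B₁, G₂)`. -/
def mB (p : Y × A × G₁ × B₁ × G₂ → ℝ) (a : A) (b₁ : B₁) (g₂ : G₂) : ℝ :=
  ∑ y : Y, (y : ℝ) * ((∑ g₁ : G₁, p (y, a, g₁, b₁, g₂)) / pAB1G2 p a b₁ g₂)

/-- Outcome regression `m_{GB}(g₁,b₁,g₂) = ∑_y y·p(y | a, g₁, b₁, g₂)` for
the adjustment set `((G₁, B₁), G₂)`. -/
def mGB (p : Y × A × G₁ × B₁ × G₂ → ℝ) (a : A) (g₁ : G₁) (b₁ : B₁) (g₂ : G₂) : ℝ :=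
  ∑ y : Y, (y : ℝ) * (p (y, a, g₁, b₁, g₂) / pAG1B1G2 p a g₁ b₁ g₂)

/-- Outcome regression `m_{GG}(g₁,g₂) = ∑_y y·p(y | a, g₁, g₂)` for the
adjustment set `(G₁, G₂)`. -/
def mGG (p : Y × A × G₁ × B₁ × G₂ → ℝ) (a : A) (g₁ : G₁) (g₂ : G₂) : ℝ :=
  ∑ y : Y, (y : ℝ) * ((∑ b₁ : B₁, p (y, a, g₁, b₁, g₂)) / pAG1G2 p a g₁ g₂)

/-- Target parameter for the adjustment set `(B₁, G₂)`. -/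
def TB (p : Y × A × G₁ × B₁ × G₂ → ℝ) (a : A) : ℝ :=
  ∑ b₁ : B₁, pB1 p b₁ * ∑ g₂ : G₂, pG2 p g₂ * mB p a b₁ g₂

/-- Target parameter for the adjustment set `((G₁, B₁), G₂)`. -/
def TGB (p : Y × A × G₁ × B₁ × G₂ → ℝ) (a : A) : ℝ :=
  ∑ g₁ : G₁, ∑ b₁ : B₁, pG1B1 p g₁ b₁ * ∑ g₂ : G₂, pG2 p g₂ * mGB p a g₁ b₁ g₂

/-- Target parameter for the adjustment set `(G₁, G₂)`. -/
def TGG (p : Y × A × G₁ × B₁ × G₂ → ℝ) (a : A) : ℝ :=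
  ∑ g₁ : G₁, pG1 p g₁ * ∑ g₂ : G₂, pG2 p g₂ * mGG p a g₁ g₂

/-- Influence function `ψ_a^{B₁,G₂}` for the adjustment set `(B₁, G₂)`. -/
def psiB (p : Y × A × G₁ × B₁ × G₂ → ℝ) (a : A)
    (y : Y) (a' : A) (b₁ : B₁) (g₂ : G₂) : ℝ :=
  (if a' = a then (1 : ℝ) else 0) * (pB1 p b₁ * pG2 p g₂ / pAB1G2 p a b₁ g₂) *
      ((y : ℝ) - mB p a b₁ g₂)
    + (∑ g₂' : G₂, pG2 p g₂' * mB p a b₁ g₂')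
    + (∑ b₁' : B₁, pB1 p b₁' * mB p a b₁' g₂)
    - 2 * TB p a

/-- Influence function `ψ_a^{(G₁,B₁),G₂}` for the adjustment set `((G₁, B₁), G₂)`. -/
def psiGB (p : Y × A × G₁ × B₁ × G₂ → ℝ) (a : A)
    (y : Y) (a' : A) (g₁ : G₁) (b₁ : B₁) (g₂ : G₂) : ℝ :=
  (if a' = a then (1 : ℝ) else 0) *
      (pG1B1 p g₁ b₁ * pG2 p g₂ / pAG1B1G2 p a g₁ b₁ g₂) *
      ((y : ℝ) - mGB p a g₁ b₁ g₂)
    + (∑ g₂' : G₂, pG2 p g₂' * mGB p a g₁ b₁ g₂')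
    + (∑ g₁' : G₁, ∑ b₁' : B₁, pG1B1 p g₁' b₁' * mGB p a g₁' b₁' g₂)
    - 2 * TGB p a

/-- Influence function `ψ_a^{G₁,G₂}` for the adjustment set `(G₁, G₂)`. -/
def psiGG (p : Y × A × G₁ × B₁ × G₂ → ℝ) (a : A)
    (y : Y) (a' : A) (g₁ : G₁) (g₂ : G₂) : ℝ :=
  (if a' = a then (1 : ℝ) else 0) * (pG1 p g₁ * pG2 p g₂ / pAG1G2 p a g₁ g₂) *
      ((y : ℝ) - mGG p a g₁ g₂)
    + (∑ g₂' : G₂, pG2 p g₂' * mGG p a g₁ g₂')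
    + (∑ g₁' : G₁, pG1 p g₁' * mGG p a g₁' g₂)
    - 2 * TGG p a

/-- Conditional independence `G₁ ⊥ (A, G₂) | B₁` under `p`. -/
def CI_G1_AG2_B1 (p : Y × A × G₁ × B₁ × G₂ → ℝ) : Prop :=
  ∀ (g₁ : G₁) (a : A) (g₂ : G₂) (b₁ : B₁),
    (∑ y : Y, p (y, a, g₁, b₁, g₂)) / pB1 p b₁ =
      (pG1B1 p g₁ b₁ / pB1 p b₁) * (pAB1G2 p a b₁ g₂ / pB1 p b₁)

/-- Conditional independence `Y ⊥ B₁ | (A, G₁, G₂)` under `p`. -/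
def CI_Y_B1_AG1G2 (p : Y × A × G₁ × B₁ × G₂ → ℝ) : Prop :=
  ∀ (y : Y) (a : A) (g₁ : G₁) (b₁ : B₁) (g₂ : G₂),
    p (y, a, g₁, b₁, g₂) / pAG1G2 p a g₁ g₂ =
      ((∑ b₁' : B₁, p (y, a, g₁, b₁', g₂)) / pAG1G2 p a g₁ g₂) *
        (pAG1B1G2 p a g₁ b₁ g₂ / pAG1G2 p a g₁ g₂)

/-- Variance of a real function of the observation under `p`. -/
def VarP (p : Y × A × G₁ × B₁ × G₂ → ℝ) (f : Y × A × G₁ × B₁ × G₂ → ℝ) : ℝ :=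
  (∑ o : Y × A × G₁ × B₁ × G₂, p o * f o ^ 2) -
    (∑ o : Y × A × G₁ × B₁ × G₂, p o * f o) ^ 2

-- Closed so that its instance variables are not attached to every lemma below.
end

section MediatorDeletion

variable {Y : Finset ℝ} {A G₁ B₁ G₂ : Type} (p : Y × A × G₁ × B₁ × G₂ → ℝ) (a : A)

theorem VarP_le_VarP_add [Fintype A] [Fintype G₁] [Fintype B₁] [Fintype G₂]
    (f d : Y × A × G₁ × B₁ × G₂ → ℝ) (hp : ∀ o, 0 ≤ p o)
    (hd : ∑ o, p o * d o = 0) (hfd : ∑ o, p o * (f o * d o) = 0) :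
    VarP p f ≤ VarP p (fun o => f o + d o) := by
  have hdd : 0 ≤ ∑ o, p o * d o ^ 2 := sum_nonneg fun o _ => mul_nonneg (hp o) (sq_nonneg _)
  have hsq : ∑ o, p o * (f o + d o) ^ 2
      = ∑ o, p o * f o ^ 2 + 2 * ∑ o, p o * (f o * d o) + ∑ o, p o * d o ^ 2 := by
    rw [mul_sum, ← sum_add_distrib, ← sum_add_distrib]
    exact sum_congr rfl fun o _ => by ring
  have hlin : ∑ o, p o * (f o + d o) = ∑ o, p o * f o + ∑ o, p o * d o := by
    rw [← sum_add_distrib]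
    exact sum_congr rfl fun o _ => by ring
  rw [VarP, VarP, hsq, hlin, hd, hfd]
  linarith

theorem pAG1B1G2_pos [Nonempty Y] (hpos : ∀ o, 0 < p o) (g₁ : G₁) (b₁ : B₁) (g₂ : G₂) :
    0 < pAG1B1G2 p a g₁ b₁ g₂ :=
  sum_pos (fun _ _ => hpos _) univ_nonempty

theorem pAG1G2_pos [Fintype B₁] [Nonempty Y] [Nonempty B₁] (hpos : ∀ o, 0 < p o)
    (g₁ : G₁) (g₂ : G₂) : 0 < pAG1G2 p a g₁ g₂ :=
  sum_pos (fun _ _ => sum_pos (fun _ _ => hpos _) univ_nonempty) univ_nonempty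

theorem sum_pAG1B1G2 [Fintype B₁] (g₁ : G₁) (g₂ : G₂) :
    ∑ b₁, pAG1B1G2 p a g₁ b₁ g₂ = pAG1G2 p a g₁ g₂ :=
  sum_comm

theorem sum_pG1B1 [Fintype A] [Fintype B₁] [Fintype G₂] (g₁ : G₁) :
    ∑ b₁, pG1B1 p g₁ b₁ = pG1 p g₁ := by
  simp only [pG1B1, pG1]
  rw [sum_comm]
  exact sum_congr rfl fun y _ => sum_comm

theorem sum_mul_sub_mGB_eq_zero [Nonempty Y] (hpos : ∀ o, 0 < p o)
    (g₁ : G₁) (b₁ : B₁) (g₂ : G₂) :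
    ∑ y : Y, p (y, a, g₁, b₁, g₂) * ((y : ℝ) - mGB p a g₁ b₁ g₂) = 0 := by
  have hP := (pAG1B1G2_pos p a hpos g₁ b₁ g₂).ne'
  have hmean : mGB p a g₁ b₁ g₂ * pAG1B1G2 p a g₁ b₁ g₂ = ∑ y : Y, p (y, a, g₁, b₁, g₂) * y := by
    rw [mGB, sum_mul]
    exact sum_congr rfl fun y _ => by field_simp
  calc ∑ y : Y, p (y, a, g₁, b₁, g₂) * ((y : ℝ) - mGB p a g₁ b₁ g₂)
      = ∑ y : Y, p (y, a, g₁, b₁, g₂) * y - mGB p a g₁ b₁ g₂ * pAG1B1G2 p a g₁ b₁ g₂ := by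
        rw [pAG1B1G2, mul_sum, ← sum_sub_distrib]
        exact sum_congr rfl fun _ _ => by ring
    _ = 0 := by rw [hmean, sub_self]

theorem p_eq_of_CI [Fintype B₁] (hpos : ∀ o, 0 < p o) (hCI : CI_Y_B1_AG1G2 p)
    (y : Y) (g₁ : G₁) (b₁ : B₁) (g₂ : G₂) :
    p (y, a, g₁, b₁, g₂) =
      pAG1B1G2 p a g₁ b₁ g₂ / pAG1G2 p a g₁ g₂ * ∑ b₁', p (y, a, g₁, b₁', g₂) := by
  have : Nonempty Y := ⟨y⟩
  have : Nonempty B₁ := ⟨b₁⟩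
  have hQ := (pAG1G2_pos p a hpos g₁ g₂).ne'
  have h := hCI y a g₁ b₁ g₂
  field_simp at h
  rw [div_mul_eq_mul_div, eq_div_iff hQ]
  linear_combination h

theorem sum_mul_eq_of_CI [Fintype B₁] (hpos : ∀ o, 0 < p o) (hCI : CI_Y_B1_AG1G2 p)
    (φ : Y → ℝ) (g₁ : G₁) (b₁ : B₁) (g₂ : G₂) :
    ∑ y, p (y, a, g₁, b₁, g₂) * φ y =
      pAG1B1G2 p a g₁ b₁ g₂ / pAG1G2 p a g₁ g₂ *
        ∑ y, (∑ b₁', p (y, a, g₁, b₁', g₂)) * φ y := by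
  rw [mul_sum]
  exact sum_congr rfl fun y _ => by rw [p_eq_of_CI p a hpos hCI, mul_assoc]

theorem mGB_eq_mGG [Fintype B₁] [Nonempty Y] (hpos : ∀ o, 0 < p o) (hCI : CI_Y_B1_AG1G2 p)
    (g₁ : G₁) (b₁ : B₁) (g₂ : G₂) : mGB p a g₁ b₁ g₂ = mGG p a g₁ g₂ := by
  have : Nonempty B₁ := ⟨b₁⟩
  have hP := (pAG1B1G2_pos p a hpos g₁ b₁ g₂).ne'
  have hQ := (pAG1G2_pos p a hpos g₁ g₂).ne'
  refine sum_congr rfl fun y _ => ?_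
  rw [p_eq_of_CI p a hpos hCI]
  field_simp

theorem TGB_eq_TGG [Fintype A] [Fintype G₁] [Fintype B₁] [Fintype G₂] [Nonempty Y]
    (hpos : ∀ o, 0 < p o) (hCI : CI_Y_B1_AG1G2 p) : TGB p a = TGG p a := by
  simp only [TGB, TGG, mGB_eq_mGG p a hpos hCI, ← sum_mul, sum_pG1B1]

noncomputable def weightGB [Fintype A] [Fintype G₁] [Fintype B₁] [Fintype G₂]
    (g₁ : G₁) (b₁ : B₁) (g₂ : G₂) : ℝ :=
  pG1B1 p g₁ b₁ * pG2 p g₂ / pAG1B1G2 p a g₁ b₁ g₂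

noncomputable def weightGG [Fintype A] [Fintype G₁] [Fintype B₁] [Fintype G₂]
    (g₁ : G₁) (g₂ : G₂) : ℝ :=
  pG1 p g₁ * pG2 p g₂ / pAG1G2 p a g₁ g₂

noncomputable def psiDiff [Fintype A] [Fintype G₁] [Fintype B₁] [Fintype G₂] [DecidableEq A]
    (y : Y) (a' : A) (g₁ : G₁) (b₁ : B₁) (g₂ : G₂) : ℝ :=
  (if a' = a then (1 : ℝ) else 0) * (weightGB p a g₁ b₁ g₂ - weightGG p a g₁ g₂) *
    ((y : ℝ) - mGG p a g₁ g₂)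

theorem psiGB_eq_psiGG_add_psiDiff [Fintype A] [Fintype G₁] [Fintype B₁] [Fintype G₂]
    [DecidableEq A] [Nonempty Y] (hpos : ∀ o, 0 < p o) (hCI : CI_Y_B1_AG1G2 p)
    (y : Y) (a' : A) (g₁ : G₁) (b₁ : B₁) (g₂ : G₂) :
    psiGB p a y a' g₁ b₁ g₂ = psiGG p a y a' g₁ g₂ + psiDiff p a y a' g₁ b₁ g₂ := by
  simp only [psiGB, psiGG, psiDiff, weightGB, weightGG, mGB_eq_mGG p a hpos hCI,
    TGB_eq_TGG p a hpos hCI, ← sum_mul, sum_pG1B1]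
  ring

theorem sum_sub_weight_mul_pAG1B1G2_eq_zero [Fintype A] [Fintype G₁] [Fintype B₁] [Fintype G₂]
    [Nonempty Y] [Nonempty B₁] (hpos : ∀ o, 0 < p o) (g₁ : G₁) (g₂ : G₂) :
    ∑ b₁, (weightGB p a g₁ b₁ g₂ - weightGG p a g₁ g₂) * pAG1B1G2 p a g₁ b₁ g₂ = 0 := by
  calc ∑ b₁, (weightGB p a g₁ b₁ g₂ - weightGG p a g₁ g₂) * pAG1B1G2 p a g₁ b₁ g₂
      = ∑ b₁, (pG1B1 p g₁ b₁ * pG2 p g₂ - weightGG p a g₁ g₂ * pAG1B1G2 p a g₁ b₁ g₂) :=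
        sum_congr rfl fun b₁ _ => by
          rw [weightGB, sub_mul, div_mul_cancel₀ _ (pAG1B1G2_pos p a hpos g₁ b₁ g₂).ne']
    _ = pG1 p g₁ * pG2 p g₂ - weightGG p a g₁ g₂ * pAG1G2 p a g₁ g₂ := by
        rw [sum_sub_distrib, ← sum_mul, ← mul_sum, sum_pG1B1, sum_pAG1B1G2]
    _ = 0 := by rw [weightGG, div_mul_cancel₀ _ (pAG1G2_pos p a hpos g₁ g₂).ne', sub_self]

theorem sum_eq_zero_of_slices [Fintype A] [Fintype G₁] [Fintype B₁] [Fintype G₂]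
    {F : Y × A × G₁ × B₁ × G₂ → ℝ}
    (hoff : ∀ y a' g₁ b₁ g₂, a' ≠ a → F (y, a', g₁, b₁, g₂) = 0)
    (hslice : ∀ g₁ g₂, ∑ b₁, ∑ y, F (y, a, g₁, b₁, g₂) = 0) :
    ∑ o, F o = 0 := by
  simp only [Fintype.sum_prod_type]
  rw [sum_comm, sum_eq_single a (fun a' _ h => sum_eq_zero fun y _ => sum_eq_zero fun g₁ _ =>
    sum_eq_zero fun b₁ _ => sum_eq_zero fun g₂ _ => hoff y a' g₁ b₁ g₂ h) (by simp), sum_comm]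
  refine sum_eq_zero fun g₁ _ => ?_
  rw [sum_comm]
  simp_rw [sum_comm (γ := Y)]
  rw [sum_comm]
  exact sum_eq_zero fun g₂ _ => hslice g₁ g₂

theorem sum_mul_psiDiff_eq_zero [Fintype A] [Fintype G₁] [Fintype B₁] [Fintype G₂]
    [DecidableEq A] [Nonempty Y] (hpos : ∀ o, 0 < p o) (hCI : CI_Y_B1_AG1G2 p) :
    ∑ o, p o * psiDiff p a o.1 o.2.1 o.2.2.1 o.2.2.2.1 o.2.2.2.2 = 0 := by
  refine sum_eq_zero_of_slices a (fun y a' g₁ b₁ g₂ h => by simp [psiDiff, h])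
    fun g₁ g₂ => sum_eq_zero fun b₁ _ => ?_
  calc ∑ y, p (y, a, g₁, b₁, g₂) * psiDiff p a y a g₁ b₁ g₂
      = (weightGB p a g₁ b₁ g₂ - weightGG p a g₁ g₂) *
          ∑ y : Y, p (y, a, g₁, b₁, g₂) * ((y : ℝ) - mGB p a g₁ b₁ g₂) := by
        rw [mGB_eq_mGG p a hpos hCI, mul_sum]
        exact sum_congr rfl fun y _ => by rw [psiDiff, if_pos rfl]; ring
    _ = 0 := by rw [sum_mul_sub_mGB_eq_zero p a hpos, mul_zero]

theorem sum_mul_psiGG_mul_psiDiff_eq_zero [Fintype A] [Fintype G₁] [Fintype B₁] [Fintype G₂]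
    [DecidableEq A] [Nonempty Y] [Nonempty B₁] (hpos : ∀ o, 0 < p o) (hCI : CI_Y_B1_AG1G2 p) :
    ∑ o, p o * (psiGG p a o.1 o.2.1 o.2.2.1 o.2.2.2.2 *
      psiDiff p a o.1 o.2.1 o.2.2.1 o.2.2.2.1 o.2.2.2.2) = 0 := by
  refine sum_eq_zero_of_slices a (fun y a' g₁ b₁ g₂ h => by simp [psiDiff, h]) fun g₁ g₂ => ?_
  set m := mGG p a g₁ g₂
  obtain ⟨r, hψ⟩ : ∃ r, ∀ y : Y, psiGG p a y a g₁ g₂ = weightGG p a g₁ g₂ * ((y : ℝ) - m) + r :=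
    ⟨_, fun y => by rw [psiGG, if_pos rfl, one_mul, add_sub_assoc, add_assoc]; rfl⟩
  set V := ∑ y : Y, (∑ b₁', p (y, a, g₁, b₁', g₂)) * ((y : ℝ) - m) ^ 2
  have hslice : ∀ b₁, ∑ y, p (y, a, g₁, b₁, g₂) * (psiGG p a y a g₁ g₂ * psiDiff p a y a g₁ b₁ g₂)
      = (weightGB p a g₁ b₁ g₂ - weightGG p a g₁ g₂) * pAG1B1G2 p a g₁ b₁ g₂ *
          (weightGG p a g₁ g₂ * V / pAG1G2 p a g₁ g₂) := by
    intro b₁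
    have hmean := sum_mul_sub_mGB_eq_zero p a hpos g₁ b₁ g₂
    rw [mGB_eq_mGG p a hpos hCI] at hmean
    calc ∑ y, p (y, a, g₁, b₁, g₂) * (psiGG p a y a g₁ g₂ * psiDiff p a y a g₁ b₁ g₂)
        = (weightGB p a g₁ b₁ g₂ - weightGG p a g₁ g₂) * weightGG p a g₁ g₂ *
              ∑ y : Y, p (y, a, g₁, b₁, g₂) * ((y : ℝ) - m) ^ 2
            + (weightGB p a g₁ b₁ g₂ - weightGG p a g₁ g₂) * r *
              ∑ y : Y, p (y, a, g₁, b₁, g₂) * ((y : ℝ) - m) := by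
          rw [mul_sum, mul_sum, ← sum_add_distrib]
          exact sum_congr rfl fun y _ => by rw [hψ, psiDiff, if_pos rfl]; ring
      _ = _ := by
          rw [hmean, sum_mul_eq_of_CI p a hpos hCI (fun y => ((y : ℝ) - m) ^ 2)]
          ring
  rw [sum_congr rfl fun b₁ _ => hslice b₁, ← sum_mul,
    sum_sub_weight_mul_pAG1B1G2_eq_zero p a hpos, zero_mul]

end MediatorDeletion

noncomputable section

variable {Y : Finset ℝ} {A G₁ B₁ G₂ : Type}
variable [Fintype A] [Fintype G₁] [Fintype B₁] [Fintype G₂] [DecidableEq A]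

theorem variance_deletion_mediator_general
    (p : Y × A × G₁ × B₁ × G₂ → ℝ)
    (hpos : ∀ o, 0 < p o) (a : A)
    (hCI : CI_Y_B1_AG1G2 p) :
    VarP p (fun o => psiGB p a o.1 o.2.1 o.2.2.1 o.2.2.2.1 o.2.2.2.2) ≥
      VarP p (fun o => psiGG p a o.1 o.2.1 o.2.2.1 o.2.2.2.2) := by
  rcases isEmpty_or_nonempty (Y × A × G₁ × B₁ × G₂) with _ | ⟨⟨y, -, -, b₁, -⟩⟩
  · simp [VarP]
  have : Nonempty Y := ⟨y⟩
  have : Nonempty B₁ := ⟨b₁⟩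
  have hdecomp : (fun o : Y × A × G₁ × B₁ × G₂ => psiGB p a o.1 o.2.1 o.2.2.1 o.2.2.2.1 o.2.2.2.2)
      = fun o => psiGG p a o.1 o.2.1 o.2.2.1 o.2.2.2.2 +
          psiDiff p a o.1 o.2.1 o.2.2.1 o.2.2.2.1 o.2.2.2.2 :=
    funext fun o => psiGB_eq_psiGG_add_psiDiff p a hpos hCI _ _ _ _ _
  rw [hdecomp]
  exact VarP_le_VarP_add p _ _ (fun o => (hpos o).le) (sum_mul_psiDiff_eq_zero p a hpos hCI)
    (sum_mul_psiGG_mul_psiDiff_eq_zero p a hpos hCI)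

/-- Lemma 4.4 (deletion of overadjustment mediator variables), discrete
form: under `Y ⊥ B₁ | (A, G₁, G₂)`, removing the mediating covariates
`B₁` never increases the asymptotic variance of the WCDE influence
function. -/
theorem variance_deletion_mediator
    (p : Y × A × G₁ × B₁ × G₂ → ℝ)
    (hpos : ∀ o, 0 < p o) (hsum : ∑ o, p o = 1) (a : A)
    (hCI : CI_Y_B1_AG1G2 p) :
    VarP p (fun o => psiGB p a o.1 o.2.1 o.2.2.1 o.2.2.2.1 o.2.2.2.2) ≥
      VarP p (fun o => psiGG p a o.1 o.2.1 o.2.2.1 o.2.2.2.2) :=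
  variance_deletion_mediator_general p hpos a hCI
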